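/- For each pair $(i,j)$ with $1 \le i,j \le N$, let $x^{(i,j)}_1,\dots,x^{(i,j)}_m$ be elements of a commutative ring with $x^{(i,j)}_{m+1}=0$. Let $G(N,m)$ be the $Nm\times Nm$ block matrix whose $(i,j)$ block has $(r,s)$ entry: $x^{(i,j)}_{\max(r,s)}$ if both $i,j$ are odd; $x^{(i,j)}_{\max(r,\,m+1-s)}$ if $i$ is odd and $j$ is even; $x^{(i,j)}_{\max(m+1-r,\,s)}$ if $i$ is even and $j$ is odd; and $x^{(i,j)}_{m+1-\min(r,s)}$ if both $i,j$ are even. Then $\det(G(N,m)) = \prod_{k=1}^{m}\det(X_{(k,k+1)})$, where $X_{(k,k+1)}$ is the $N\times N$ matrix with $(i,j)$ entry $x^{(i,j)}_k - x^{(i,j)}_{k+1}$. -/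

import Mathlib

open Matrix Finset

namespace BlockHookAux

variable {R : Type*} [CommRing R]

/-- The hook matrix in `(k, i)` indexing. -/
def Kmat (N m : ℕ) (x : ℕ → ℕ → ℕ → R) : Matrix (Fin m × Fin N) (Fin m × Fin N) R :=
  Matrix.of fun p q => x (p.2.1 + 1) (q.2.1 + 1) (max (p.1.1 + 1) (q.1.1 + 1))

/-- The elementary shift matrix. -/
def Emat (N m : ℕ) : Matrix (Fin m × Fin N) (Fin m × Fin N) R :=
  Matrix.of fun p q => if q.1.1 = p.1.1 + 1 ∧ q.2 = p.2 then (1 : R) else 0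

/-- The row-operation matrix. -/
def Umat (N m : ℕ) : Matrix (Fin m × Fin N) (Fin m × Fin N) R := 1 - Emat N m

/-- The result of the row operations. -/
def Lmat (N m : ℕ) (x : ℕ → ℕ → ℕ → R) : Matrix (Fin m × Fin N) (Fin m × Fin N) R :=
  Matrix.of fun p q =>
    x (p.2.1 + 1) (q.2.1 + 1) (max (p.1.1 + 1) (q.1.1 + 1)) -
      (if p.1.1 + 1 < m then x (p.2.1 + 1) (q.2.1 + 1) (max (p.1.1 + 2) (q.1.1 + 1)) else 0)

lemma U_mul_K (N m : ℕ) (x : ℕ → ℕ → ℕ → R) : Umat N m * Kmat N m x = Lmat N m x := by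
  ext p q
  rw [Umat, sub_mul, one_mul]
  have hE : (Emat (R := R) N m * Kmat N m x) p q =
      (if p.1.1 + 1 < m then x (p.2.1 + 1) (q.2.1 + 1) (max (p.1.1 + 2) (q.1.1 + 1)) else 0) := by
    rw [Matrix.mul_apply]
    by_cases h : p.1.1 + 1 < m
    · rw [if_pos h]
      have hz : ∀ z : Fin m × Fin N,
          Emat (R := R) N m p z = if z = (⟨p.1.1 + 1, h⟩, p.2) then 1 else 0 := by
        intro z
        simp only [Emat, Matrix.of_apply]
        congr 1
        simp only [Prod.ext_iff, Fin.ext_iff, eq_iff_iff]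
      simp only [hz, ite_mul, one_mul, zero_mul]
      rw [Finset.sum_ite_eq' Finset.univ (⟨⟨p.1.1 + 1, h⟩, p.2⟩ : Fin m × Fin N)
        (fun z => Kmat N m x z q)]
      simp [Kmat]
      congr 1
      omega
    · rw [if_neg h]
      apply Finset.sum_eq_zero
      intro z _
      have : Emat (R := R) N m p z = 0 := by
        simp only [Emat, Matrix.of_apply, ite_eq_right_iff]
        rintro ⟨h1, -⟩
        exact absurd (h1 ▸ z.1.isLt) h
      rw [this, zero_mul]
  rw [Matrix.sub_apply, hE]
  rfl

lemma det_U (N m : ℕ) : (Umat (R := R) N m).det = 1 := by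
  have hbt : BlockTriangular (Umat (R := R) N m) (fun p => p.1) := by
    intro p q h
    have h' : q.1 < p.1 := h
    simp only [Umat, Matrix.sub_apply, Matrix.one_apply, Emat, Matrix.of_apply]
    rw [if_neg, if_neg, sub_zero]
    · rintro ⟨h1, -⟩
      have := Fin.lt_iff_val_lt_val.mp h'
      omega
    · rintro rfl; exact lt_irrefl _ h'
  rw [hbt.det_fintype]
  apply Finset.prod_eq_one
  intro a _
  have key : (Umat (R := R) N m).toSquareBlock (fun p => p.1) a = 1 := by
    ext ⟨p, hp⟩ ⟨q, hq⟩
    by_cases hpq : p = q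
    · subst hpq
      simp [toSquareBlock_def, Umat, Emat, Matrix.one_apply]
    · have hE : (Emat (R := R) N m) p q = 0 := by
        simp only [Emat, Matrix.of_apply, ite_eq_right_iff]
        rintro ⟨h1, -⟩
        have hp' : (p.1 : ℕ) = a := by rw [hp]
        have hq' : (q.1 : ℕ) = a := by rw [hq]
        omega
      have hsub : (⟨p, hp⟩ : { p : Fin m × Fin N // p.1 = a }) ≠ ⟨q, hq⟩ := by
        simp [hpq]
      simp [toSquareBlock_def, Umat, Emat, Matrix.one_apply, hpq, hsub] at hE ⊢
      exact hE
  rw [key, Matrix.det_one]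

lemma L_blockTriangular (N m : ℕ) (x : ℕ → ℕ → ℕ → R) :
    BlockTriangular (Lmat N m x) (fun p => p.1.rev) := by
  intro p q h
  have h' : (q.1.rev : ℕ) < (p.1.rev : ℕ) := h
  have hlt : p.1.1 < q.1.1 := by
    rw [Fin.val_rev, Fin.val_rev] at h'
    have := p.1.isLt
    have := q.1.isLt
    omega
  simp only [Lmat, Matrix.of_apply]
  rw [if_pos (by omega : p.1.1 + 1 < m)]
  rw [max_eq_right (by omega : p.1.1 + 1 ≤ q.1.1 + 1),
    max_eq_right (by omega : p.1.1 + 2 ≤ q.1.1 + 1), sub_self]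

end BlockHookAux

open BlockHookAux in
theorem block_hook_det_G {R : Type*} [CommRing R] (N m : ℕ) (x : ℕ → ℕ → ℕ → R)
    (hx : ∀ i j, x i j (m + 1) = 0) :
    Matrix.det (Matrix.of fun p q : Fin N × Fin m =>
      if (p.1.1 + 1) % 2 = 1 then
        (if (q.1.1 + 1) % 2 = 1 then x (p.1.1 + 1) (q.1.1 + 1) (max (p.2.1 + 1) (q.2.1 + 1)) else x (p.1.1 + 1) (q.1.1 + 1) (max (p.2.1 + 1) (m + 1 - (q.2.1 + 1))))
      else
        (if (q.1.1 + 1) % 2 = 1 then x (p.1.1 + 1) (q.1.1 + 1) (max (m + 1 - (p.2.1 + 1)) (q.2.1 + 1)) else x (p.1.1 + 1) (q.1.1 + 1) (m + 1 - min (p.2.1 + 1) (q.2.1 + 1)))) =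
    ∏ k ∈ Finset.range m, Matrix.det (Matrix.of fun i j : Fin N =>
      x (i.1 + 1) (j.1 + 1) (k + 1) - x (i.1 + 1) (j.1 + 1) (k + 2)) := by
  classical
  -- the flip equivalence
  have hinv : Function.Involutive (fun p : Fin N × Fin m =>
      (p.1, if p.1.1 % 2 = 0 then p.2 else p.2.rev)) := by
    rintro ⟨i, r⟩
    by_cases h : i.1 % 2 = 0 <;> simp [h, Fin.rev_rev]
  set e := hinv.toPerm with he
  -- the plain hook matrix
  set H : Matrix (Fin N × Fin m) (Fin N × Fin m) R :=
    Matrix.of fun p q => x (p.1.1 + 1) (q.1.1 + 1) (max (p.2.1 + 1) (q.2.1 + 1)) with hH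
  -- Step 1 : G = H.submatrix e e
  have step1 : (Matrix.of fun p q : Fin N × Fin m =>
      if (p.1.1 + 1) % 2 = 1 then
        (if (q.1.1 + 1) % 2 = 1 then x (p.1.1 + 1) (q.1.1 + 1) (max (p.2.1 + 1) (q.2.1 + 1)) else x (p.1.1 + 1) (q.1.1 + 1) (max (p.2.1 + 1) (m + 1 - (q.2.1 + 1))))
      else
        (if (q.1.1 + 1) % 2 = 1 then x (p.1.1 + 1) (q.1.1 + 1) (max (m + 1 - (p.2.1 + 1)) (q.2.1 + 1)) else x (p.1.1 + 1) (q.1.1 + 1) (m + 1 - min (p.2.1 + 1) (q.2.1 + 1)))) =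
      H.submatrix e e := by
    ext ⟨i, r⟩ ⟨j, s⟩
    have her : (e (i, r)).1 = i := rfl
    have hes : (e (j, s)).1 = j := rfl
    simp only [Matrix.submatrix_apply, hH, Matrix.of_apply, her, hes, he,
      Function.Involutive.coe_toPerm]
    by_cases hi : i.1 % 2 = 0 <;> by_cases hj : j.1 % 2 = 0
    · rw [if_pos (by omega), if_pos (by omega), if_pos hi, if_pos hj]
    · rw [if_pos (by omega), if_neg (by omega), if_pos hi, if_neg hj]
      congr 1
      have := s.isLt
      simp only [Fin.val_rev]
      omega
    · rw [if_neg (by omega), if_pos (by omega), if_neg hi, if_pos hj]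
      congr 1
      have := r.isLt
      simp only [Fin.val_rev]
      omega
    · rw [if_neg (by omega), if_neg (by omega), if_neg hi, if_neg hj]
      congr 1
      have := r.isLt
      have := s.isLt
      simp only [Fin.val_rev]
      omega
  rw [step1, Matrix.det_submatrix_equiv_self]
  -- Step 2 : H = K.submatrix prodComm prodComm
  have step2 : H = (Kmat N m x).submatrix (Equiv.prodComm (Fin N) (Fin m))
      (Equiv.prodComm (Fin N) (Fin m)) := by
    ext ⟨i, r⟩ ⟨j, s⟩
    rfl
  rw [step2, Matrix.det_submatrix_equiv_self]
  -- Step 3 : det K = det L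
  have step3 : (Kmat N m x).det = (Lmat N m x).det := by
    rw [← U_mul_K N m x, Matrix.det_mul, det_U, one_mul]
  rw [step3]
  -- Step 4 : block triangular determinant
  rw [(L_blockTriangular N m x).det_fintype]
  have step4 : ∀ a : Fin m,
      ((Lmat N m x).toSquareBlock (fun p => p.1.rev) a).det =
      Matrix.det (Matrix.of fun i j : Fin N =>
        x (i.1 + 1) (j.1 + 1) (a.rev.1 + 1) - x (i.1 + 1) (j.1 + 1) (a.rev.1 + 2)) := by
    intro a
    let sq : { p : Fin m × Fin N // p.1.rev = a } ≃ Fin N :=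
      { toFun := fun p => p.1.2
        invFun := fun i => ⟨(a.rev, i), by simp [Fin.rev_rev]⟩
        left_inv := by
          rintro ⟨⟨r, i⟩, hp⟩
          have : r = a.rev := by rw [← hp, Fin.rev_rev]
          subst this
          rfl
        right_inv := fun i => rfl }
    have : (Lmat N m x).toSquareBlock (fun p => p.1.rev) a =
        (Matrix.of fun i j : Fin N =>
          x (i.1 + 1) (j.1 + 1) (a.rev.1 + 1) - x (i.1 + 1) (j.1 + 1) (a.rev.1 + 2)).submatrix
          sq sq := by
      ext ⟨⟨r, i⟩, hp⟩ ⟨⟨s, j⟩, hq⟩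
      have hr : r = a.rev := by rw [← hp, Fin.rev_rev]
      have hs : s = a.rev := by rw [← hq, Fin.rev_rev]
      subst hr; subst hs
      simp only [toSquareBlock_def, Lmat, Matrix.of_apply, Matrix.submatrix_apply]
      simp only [sq, Equiv.coe_fn_mk]
      rw [max_self]
      by_cases h : a.rev.1 + 1 < m
      · rw [if_pos h, max_eq_left (by omega)]
      · rw [if_neg h]
        have hm : a.rev.1 + 2 = m + 1 := by
          have := a.rev.isLt
          omega
        rw [hm, hx]
    rw [this, Matrix.det_submatrix_equiv_self]
  calc ∏ a : Fin m, ((Lmat N m x).toSquareBlock (fun p => p.1.rev) a).det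
      = ∏ a : Fin m, Matrix.det (Matrix.of fun i j : Fin N =>
          x (i.1 + 1) (j.1 + 1) (a.rev.1 + 1) - x (i.1 + 1) (j.1 + 1) (a.rev.1 + 2)) :=
        Finset.prod_congr rfl fun a _ => step4 a
    _ = ∏ a : Fin m, Matrix.det (Matrix.of fun i j : Fin N =>
          x (i.1 + 1) (j.1 + 1) (a.1 + 1) - x (i.1 + 1) (j.1 + 1) (a.1 + 2)) := by
        exact Fintype.prod_equiv (Fin.revPerm (n := m)) _ _ (fun a => rfl)
    _ = ∏ k ∈ Finset.range m, Matrix.det (Matrix.of fun i j : Fin N =>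
          x (i.1 + 1) (j.1 + 1) (k + 1) - x (i.1 + 1) (j.1 + 1) (k + 2)) :=
        Fin.prod_univ_eq_prod_range (fun k => Matrix.det (Matrix.of fun i j : Fin N =>
          x (i.1 + 1) (j.1 + 1) (k + 1) - x (i.1 + 1) (j.1 + 1) (k + 2))) m
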